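/- Lemma 3.8 (estimate from above for R^ε, integral curvature game). Let K satisfy the stated kernel conditions, let φ : (0,T]×ℝ^N → ℝ be bounded and C², and let (t₀,x₀) ∈ (0,T)×ℝ^N. There exists o : (0,1)×(0,1) → [0,∞) with o(ε,r) → 0 as (ε,r) → (0,0) such that for all sufficiently small ε, r > 0 and all (t,x) in the ball B_r(t₀,x₀), at least one of the following holds: (i) R^ε[φ](t,x) − φ(t,x) ≤ ε²·(∂_tφ(t₀,x₀) + o(ε,r)); (ii) D_xφ(t₀,x₀) = 0 and there exists (y,ψ) ∈ C^+(x) with R^ε[φ](t,x) − φ(t,x) ≤ T_P(y,ψ)·(∂_tφ(t₀,x₀) + o(ε,r)); (iii) D_xφ(t₀,x₀) ≠ 0, κ*[x₀,φ(t₀,·)] ≥ 0, and there exists (y,ψ) ∈ C^+(x) with Dψ(y) ≠ 0, 0 < κ*[y,ψ] ≤ κ*[x₀,φ(t₀,·)] + o(ε,r), T_P(y,ψ) = min(ε/κ*[y,ψ], ε^{1/2}), and R^ε[φ](t,x) − φ(t,x) ≤ T_P(y,ψ)·(∂_tφ(t₀,x₀) + κ*[x₀,φ(t₀,·)]·|D_xφ(t₀,x₀)|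 + o(ε,r)). -/

import Mathlib

open MeasureTheory Metric Set Filter Topology RealInnerProductSpace

noncomputable section

attribute [local instance] Classical.propDecidable

/-- ℝ^N. -/
abbrev Euc (N : ℕ) := EuclideanSpace ℝ (Fin N)

/-- The paraboloid `Q(r,e) = {z : r|z·e| ≤ |z − (z·e)e|²}`. -/
def parab {N : ℕ} (r : ℝ) (e : Euc N) : Set (Euc N) :=
  {z | r * |⟪z, e⟫| ≤ ‖z - ⟪z, e⟫ • e‖ ^ 2}

/-- The conditions on the interaction kernel `K`. -/
def KernelOK {N : ℕ} (R : ℝ) (K : Euc N → ℝ) : Prop :=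
  (∀ z, 0 ≤ K z) ∧ (∀ z, K (-z) = K z) ∧ Function.support K ⊆ ball (0 : Euc N) R ∧
  -- K ∈ W^{1,1}(ℝ^N ∖ B_δ(0)) for every δ > 0
  (∀ δ > (0:ℝ), IntegrableOn K ((ball (0 : Euc N) δ)ᶜ) volume ∧
    DifferentiableOn ℝ K ((closedBall (0 : Euc N) δ)ᶜ) ∧
    IntegrableOn (fun z => ‖fderiv ℝ K z‖) ((ball (0 : Euc N) δ)ᶜ) volume) ∧
  -- ∫_{B_δ(0)} K = o(1/δ)
  (∀ δ > (0:ℝ), IntegrableOn K (ball (0 : Euc N) δ) volume) ∧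
  Tendsto (fun δ : ℝ => δ * ∫ z in ball (0 : Euc N) δ, K z) (𝓝[>] 0) (𝓝 0) ∧
  -- ∫_{Q(r,e)} K < ∞ for all r > 0 and ∫_{Q(r,e)} K = o(1/r)
  (∀ e : Euc N, ‖e‖ = 1 →
    (∀ r > (0:ℝ), IntegrableOn K (parab r e) volume) ∧
    Tendsto (fun r : ℝ => r * ∫ z in parab r e, K z) (𝓝[>] 0) (𝓝 0))

/-- The upper integral curvature `κ*[x,U]`, defined as a principal value. -/
def kSt {N : ℕ} (K : Euc N → ℝ) (U : Euc N → ℝ) (x : Euc N) : ℝ :=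
  limUnder (𝓝[>] (0:ℝ)) (fun δ =>
    ∫ z in (ball (0 : Euc N) δ)ᶜ, K z * (if U x ≤ U (x + z) then (1:ℝ) else -1))

/-- The lower integral curvature `κ_*[x,U]`, defined as a principal value. -/
def kLo {N : ℕ} (K : Euc N → ℝ) (U : Euc N → ℝ) (x : Euc N) : ℝ :=
  limUnder (𝓝[>] (0:ℝ)) (fun δ =>
    ∫ z in (ball (0 : Euc N) δ)ᶜ, K z * (if U x < U (x + z) then (1:ℝ) else -1))

/-- The cut-off function `C_ε(r) = (r ∨ ε^{3/2}) ∧ ε^{1/2}`. -/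
def cutC (ε r : ℝ) : ℝ := min (max r (ε ^ ((3:ℝ)/2))) (ε ^ ((1:ℝ)/2))

/-- Paul's time increment `T_P(y,ψ)`. -/
def TPg {N : ℕ} (K : Euc N → ℝ) (ε : ℝ) (y : Euc N) (ψ : Euc N → ℝ) : ℝ :=
  if gradient ψ y ≠ 0 ∧ 0 < kSt K ψ y then cutC ε (ε / kSt K ψ y) else ε ^ 2

/-- Carol's time increment `T_C(y,ψ)`. -/
def TCg {N : ℕ} (K : Euc N → ℝ) (ε : ℝ) (y : Euc N) (ψ : Euc N → ℝ) : ℝ :=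
  if gradient ψ y ≠ 0 ∧ kLo K ψ y < 0 then cutC ε (ε / |kLo K ψ y|) else ε ^ 2

/-- Admissible choices `C^+(x)` of a point and a hypersurface. -/
def Cplus {N : ℕ} (ε : ℝ) (x : Euc N) : Set (Euc N × (Euc N → ℝ)) :=
  {p | p.1 ∈ ball x ε ∧ ContDiff ℝ 2 p.2 ∧ p.2 x ≤ p.2 p.1}

/-- Admissible choices `C^-(x)` of a point and a hypersurface. -/
def Cminus {N : ℕ} (ε : ℝ) (x : Euc N) : Set (Euc N × (Euc N → ℝ)) :=
  {p | p.1 ∈ ball x ε ∧ ContDiff ℝ 2 p.2 ∧ p.2 p.1 ≤ p.2 x}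

/-- The target set `P^+(x,y,ψ)`. -/
def Pplus {N : ℕ} (K : Euc N → ℝ) (R : ℝ) (x y : Euc N) (ψ : Euc N → ℝ) : Set (Euc N) :=
  if gradient ψ y ≠ 0 ∧ 0 < kSt K ψ y then {z | z ∈ ball y R ∧ ψ y ≤ ψ z} else {x}

/-- The target set `P^-(x,y,ψ)`. -/
def Pminus {N : ℕ} (K : Euc N → ℝ) (R : ℝ) (x y : Euc N) (ψ : Euc N → ℝ) : Set (Euc N) :=
  if gradient ψ y ≠ 0 ∧ kLo K ψ y < 0 then {z | z ∈ ball y R ∧ ψ z ≤ ψ y} else {x}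

/-- The operator `R^ε[φ]`. -/
def Rg {N : ℕ} (K : Euc N → ℝ) (R ε : ℝ) (φ : ℝ → Euc N → ℝ) (t : ℝ) (x : Euc N) : ℝ :=
  sSup ((fun p : Euc N × (Euc N → ℝ) =>
      sInf ((fun z => φ (t + TPg K ε p.1 p.2) z) '' Pplus K R x p.1 p.2)) '' Cplus ε x)

/-- The operator `R_ε[φ]`. -/
def Rgl {N : ℕ} (K : Euc N → ℝ) (R ε : ℝ) (φ : ℝ → Euc N → ℝ) (t : ℝ) (x : Euc N) : ℝ :=
  sInf ((fun p : Euc N × (Euc N → ℝ) =>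
      sSup ((fun z => φ (t + TCg K ε p.1 p.2) z) '' Pminus K R x p.1 p.2)) '' Cminus ε x)

/-- The one-step game operator `S^ε[φ] = R^ε[R_ε[φ]]` for the integral curvature game. -/
def Sg {N : ℕ} (K : Euc N → ℝ) (R ε : ℝ) (φ : ℝ → Euc N → ℝ) (t : ℝ) (x : Euc N) : ℝ :=
  Rg K R ε (fun s y => Rgl K R ε φ s y) t x

/-- Viscosity subsolution of `−∂_t u − κ[x,u]|Du| = 0` on `(0,T)×ℝ^N`. -/
def CurvSubsol {N : ℕ} (K : Euc N → ℝ) (R T : ℝ) (u : ℝ → Euc N → ℝ) : Prop :=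
  UpperSemicontinuousOn (fun p : ℝ × Euc N => u p.1 p.2) (Ioo (0:ℝ) T ×ˢ univ) ∧
  ∀ φ : ℝ → Euc N → ℝ,
    ContDiffOn ℝ 2 (fun p : ℝ × Euc N => φ p.1 p.2) (Ioo (0:ℝ) T ×ˢ univ) →
    ∀ t ∈ Ioo (0:ℝ) T, ∀ x : Euc N,
      -- u − φ attains a strict maximum on (0,T) × B_{R+1}(x) at (t,x)
      (∀ s ∈ Ioo (0:ℝ) T, ∀ y ∈ ball x (R + 1), (s, y) ≠ (t, x) →
        u s y - φ s y < u t x - φ t x) →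
      ((gradient (φ t) x ≠ 0 →
          -(deriv (fun s => φ s x) t) - kSt K (φ t) x * ‖gradient (φ t) x‖ ≤ 0) ∧
       (gradient (φ t) x = 0 → -(deriv (fun s => φ s x) t) ≤ 0))

/-- Viscosity supersolution of `−∂_t u − κ[x,u]|Du| = 0` on `(0,T)×ℝ^N`. -/
def CurvSupersol {N : ℕ} (K : Euc N → ℝ) (R T : ℝ) (u : ℝ → Euc N → ℝ) : Prop :=
  LowerSemicontinuousOn (fun p : ℝ × Euc N => u p.1 p.2) (Ioo (0:ℝ) T ×ˢ univ) ∧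
  ∀ φ : ℝ → Euc N → ℝ,
    ContDiffOn ℝ 2 (fun p : ℝ × Euc N => φ p.1 p.2) (Ioo (0:ℝ) T ×ˢ univ) →
    ∀ t ∈ Ioo (0:ℝ) T, ∀ x : Euc N,
      -- u − φ attains a strict minimum on (0,T) × B_{R+1}(x) at (t,x)
      (∀ s ∈ Ioo (0:ℝ) T, ∀ y ∈ ball x (R + 1), (s, y) ≠ (t, x) →
        u t x - φ t x < u s y - φ s y) →
      ((gradient (φ t) x ≠ 0 →
          0 ≤ -(deriv (fun s => φ s x) t) - kLo K (φ t) x * ‖gradient (φ t) x‖) ∧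
       (gradient (φ t) x = 0 → 0 ≤ -(deriv (fun s => φ s x) t)))

/-- Upper relaxed semi-limit `limsup* u^ε`. -/
def relaxSup {N : ℕ} (u : ℝ → ℝ → Euc N → ℝ) (t : ℝ) (x : Euc N) : ℝ :=
  sInf {a | ∃ δ > (0:ℝ), a = sSup ((fun q : ℝ × ℝ × Euc N => u q.1 q.2.1 q.2.2) ''
    {q | 0 < q.1 ∧ q.1 < δ ∧ |q.2.1 - t| < δ ∧ dist q.2.2 x < δ})}

/-- Lower relaxed semi-limit `liminf* u^ε`. -/
def relaxInf {N : ℕ} (u : ℝ → ℝ → Euc N → ℝ) (t : ℝ) (x : Euc N) : ℝ :=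
  sSup {a | ∃ δ > (0:ℝ), a = sInf ((fun q : ℝ × ℝ × Euc N => u q.1 q.2.1 q.2.2) ''
    {q | 0 < q.1 ∧ q.1 < δ ∧ |q.2.1 - t| < δ ∧ dist q.2.2 x < δ})}

/-!
Fix a near-optimal choice `(y, ψ)` of the maximizing player in `R^ε[φ](t, x)`. If it does not
trigger the curvature move, `P^+ = {x}` and time advances by `ε²`, so the first-order expansion of
`φ` at `(t₀, x₀)` gives (i). Otherwise the minimizing player may answer `y` itself, so with
`T = T_P(y, ψ) = min(ε / κ*[y,ψ], ε^{1/2})` the same expansion bounds `R^ε[φ] - φ` by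
`T (∂ₜφ + |D_xφ| (κ*[y,ψ] + ε^{1/2}))`, using `ε ≤ T (κ*[y,ψ] + ε^{1/2})`. This is (ii) when
`D_xφ(t₀, x₀) = 0`. When it is not, either the payoff is below `φ(t, x) + ε² ∂ₜφ`, which is (i), or
every point `y + z` of the upper level set of `ψ` is a possible answer with a value at least that,
and by uniform continuity `φ(t₀, x₀ + z) ≥ φ(t₀, x₀) - δ`. The signs in `κ*[y,ψ]` and
`κ*[x₀,φ(t₀,·)]` then only disagree on the band `{φ(t₀, x₀) - δ ≤ φ(t₀, x₀ + ·) < φ(t₀, x₀)}`,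
whose `K`-mass tends to `0` with `δ`; this gives `κ*[y,ψ] ≤ κ*[x₀,φ(t₀,·)] + o(1)` and (iii).
Once every error `η > 0` is achieved for all small `ε` and `r`, the infimum of the achieved errors
is the modulus `o(ε, r)`.

The kernel is integrable, so the principal values defining `κ*` are the absolutely convergent
integrals `∫ K σ`, with `σ = ±1` according to the sign of `U(x + z) - U(x)`.
-/

lemma exists_modulus_of_forall_pos {P : ℝ → ℝ → ℝ → Prop}
    (hmono : ∀ ε r η η', 0 < ε → η ≤ η' → P ε r η → P ε r η')
    (h : ∀ η > 0, ∀ᶠ p : ℝ × ℝ in 𝓝[>] 0 ×ˢ 𝓝[>] 0, P p.1 p.2 η) :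
    ∃ o : ℝ → ℝ → ℝ, (∀ ε r, 0 ≤ o ε r) ∧
      Tendsto (fun p : ℝ × ℝ => o p.1 p.2) (𝓝[Ioi 0 ×ˢ Ioi 0] ((0:ℝ), (0:ℝ))) (𝓝 0) ∧
      ∃ ε₀ > (0:ℝ), ∃ r₀ > (0:ℝ), ∀ ε ∈ Ioo (0:ℝ) ε₀, ∀ r ∈ Ioo (0:ℝ) r₀, P ε r (o ε r) := by
  set S : ℝ → ℝ → Set ℝ := fun ε r => {η | 0 < η ∧ P ε r η}
  have hS : ∀ ε r, 0 ≤ sInf (S ε r) := fun ε r => Real.sInf_nonneg fun η hη => hη.1.le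
  -- the infimum need not be admissible; adding `|ε|` makes it so
  refine ⟨fun ε r => sInf (S ε r) + |ε|, fun ε r => add_nonneg (hS ε r) (abs_nonneg ε), ?_, ?_⟩
  · rw [nhdsWithin_prod_eq]
    refine tendsto_order.2 ⟨fun γ hγ => Eventually.of_forall fun p =>
      hγ.trans_le (add_nonneg (hS _ _) (abs_nonneg _)), fun γ hγ => ?_⟩
    have hfst : Tendsto (fun p : ℝ × ℝ => |p.1|) (𝓝[>] 0 ×ˢ 𝓝[>] 0) (𝓝 0) := by
      simpa using ((tendsto_fst (f := 𝓝[>] (0:ℝ)) (g := 𝓝[>] (0:ℝ))).mono_right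
        nhdsWithin_le_nhds).abs
    filter_upwards [h (γ / 2) (by positivity), hfst.eventually_lt_const (half_pos hγ)]
      with p hp hp1
    have : sInf (S p.1 p.2) ≤ γ / 2 := csInf_le ⟨0, fun η hη => hη.1.le⟩ ⟨half_pos hγ, hp⟩
    linarith
  · obtain ⟨U, hU, V, hV, hUV⟩ := eventually_prod_iff.1 (h 1 one_pos)
    obtain ⟨ε₀, hε₀, hε₀U⟩ := mem_nhdsGT_iff_exists_Ioo_subset.1 hU
    obtain ⟨r₀, hr₀, hr₀V⟩ := mem_nhdsGT_iff_exists_Ioo_subset.1 hV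
    refine ⟨ε₀, hε₀, r₀, hr₀, fun ε hε r hr => ?_⟩
    obtain ⟨η, hηS, hηlt⟩ := exists_lt_of_csInf_lt (s := S ε r)
      ⟨1, one_pos, hUV (hε₀U hε) (hr₀V hr)⟩ (lt_add_of_pos_right _ (abs_pos.2 hε.1.ne'))
    exact hmono _ _ _ _ hε.1 hηlt.le hηS.2

lemma HasStrictFDerivAt.exists_ball_sub_le {E : Type*} [NormedAddCommGroup E] [NormedSpace ℝ E]
    {f : E → ℝ} {f' : E →L[ℝ] ℝ} {p : E} (hf : HasStrictFDerivAt f f' p) {c : ℝ} (hc : 0 < c) :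
    ∃ ρ > 0, ∀ q ∈ ball p ρ, ∀ q' ∈ ball p ρ, f q - f q' ≤ f' (q - q') + c * ‖q - q'‖ := by
  obtain ⟨ρ, hρ, hball⟩ := Metric.eventually_nhds_iff_ball.1 (hf.isLittleO.def hc)
  refine ⟨ρ, hρ, fun q hq q' hq' => ?_⟩
  have := hball (q, q') (ball_prod_same p p ρ ▸ ⟨hq, hq'⟩)
  rw [Real.norm_eq_abs] at this
  linarith [le_abs_self (f q - f q' - f' (q - q'))]

lemma HasFDerivAt.apply_prod_eq {E : Type*} [NormedAddCommGroup E] [InnerProductSpace ℝ E]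
    [CompleteSpace E] {Φ : ℝ × E → ℝ} {Φ' : ℝ × E →L[ℝ] ℝ} {t : ℝ} {x : E}
    (hΦ : HasFDerivAt Φ Φ' (t, x)) (τ : ℝ) (w : E) :
    Φ' (τ, w) = τ * deriv (fun s => Φ (s, x)) t + ⟪gradient (fun y => Φ (t, y)) x, w⟫ := by
  have ht : HasDerivAt (fun s => Φ (s, x)) (Φ' (1, 0)) t :=
    hΦ.comp_hasDerivAt t ((hasDerivAt_id t).prodMk (hasDerivAt_const t x))
  have hx : HasFDerivAt (fun y => Φ (t, y)) _ x :=
    hΦ.comp x ((hasFDerivAt_const t x).prodMk (hasFDerivAt_id x))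
  rw [ht.deriv, gradient, hx.fderiv, InnerProductSpace.toDual_symm_apply]
  have : ((τ, w) : ℝ × E) = τ • ((1:ℝ), (0:E)) + ((0:ℝ), w) := by simp
  rw [this, map_add, map_smul, smul_eq_mul]
  simp

lemma IsCompact.exists_forall_dist_lt {α β : Type*} [PseudoMetricSpace α] [PseudoMetricSpace β]
    {S : Set α} (hS : IsCompact S) {f : α → β} (hf : ∀ p ∈ S, ContinuousAt f p) {ω : ℝ}
    (hω : 0 < ω) : ∃ ρ > 0, ∀ p ∈ S, ∀ q, dist p q < ρ → dist (f p) (f q) < ω := by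
  obtain ⟨ρ, hρ, h⟩ := mem_uniformity_dist.1
    (hS.uniformContinuousAt_of_continuousAt f hf (dist_mem_uniformity hω))
  exact ⟨ρ, hρ, fun p hp q hpq => h hpq hp⟩

lemma tendsto_setIntegral_preimage_Ico_zero {α : Type*} [MeasurableSpace α] {μ : Measure α}
    {f : α → ℝ} (hf : Integrable f μ) {g : α → ℝ} (hg : Measurable g) :
    Tendsto (fun δ => ∫ z in g ⁻¹' Ico (-δ) 0, f z ∂μ) (𝓝[>] 0) (𝓝 0) := by
  have hmeas : ∀ δ : ℝ, MeasurableSet (g ⁻¹' Ico (-δ) 0) := fun δ => hg measurableSet_Ico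
  simp_rw [← integral_indicator (hmeas _)]
  suffices h : Tendsto (fun δ => ∫ z, (g ⁻¹' Ico (-δ) 0).indicator f z ∂μ) (𝓝[>] 0)
      (𝓝 (∫ _, (0:ℝ) ∂μ)) by simpa using h
  refine tendsto_integral_filter_of_dominated_convergence (fun z => ‖f z‖)
    (Eventually.of_forall fun δ => hf.aestronglyMeasurable.indicator (hmeas δ))
    (Eventually.of_forall fun δ => Eventually.of_forall fun z => ?_) hf.norm
    (Eventually.of_forall fun z => tendsto_const_nhds.congr' ?_)
  · rw [norm_indicator_eq_indicator_norm]
    exact indicator_le_self' (fun _ _ => norm_nonneg _) z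
  · rcases lt_or_ge (g z) 0 with hz | hz
    · filter_upwards [Ioo_mem_nhdsGT (neg_pos.2 hz)] with δ hδ
      exact (indicator_of_notMem (fun h => by linarith [h.1, hδ.2]) _).symm
    · exact Eventually.of_forall fun δ => (indicator_of_notMem (fun h => h.2.not_ge hz) _).symm

lemma tendsto_setIntegral_compl_ball {E : Type*} [NormedAddCommGroup E] [MeasurableSpace E]
    [OpensMeasurableSpace E] {μ : Measure E} [NullSingletonClass μ] {g : E → ℝ}
    (hg : Integrable g μ) (x : E) :
    Tendsto (fun δ => ∫ z in (ball x δ)ᶜ, g z ∂μ) (𝓝[>] 0) (𝓝 (∫ z, g z ∂μ)) := by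
  simp_rw [← integral_indicator measurableSet_ball.compl]
  refine tendsto_integral_filter_of_dominated_convergence (fun z => ‖g z‖)
    (Eventually.of_forall fun δ => hg.aestronglyMeasurable.indicator measurableSet_ball.compl)
    (Eventually.of_forall fun δ => Eventually.of_forall fun z => ?_) hg.norm ?_
  · rw [norm_indicator_eq_indicator_norm]
    exact indicator_le_self' (fun _ _ => norm_nonneg _) z
  · filter_upwards [compl_mem_ae_iff.2 (measure_singleton x)] with z hz
    refine tendsto_const_nhds.congr' ?_
    filter_upwards [Ioo_mem_nhdsGT (dist_pos.2 hz)] with δ hδ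
    exact (indicator_of_mem (show z ∈ (ball x δ)ᶜ from fun h => (mem_ball.1 h).not_gt hδ.2) _).symm

section Curvature

variable {N : ℕ} {R : ℝ} {K : Euc N → ℝ}

lemma KernelOK.integrable (hK : KernelOK R K) : Integrable K := by
  simpa using (hK.2.2.2.2.1 1 one_pos).union (hK.2.2.2.1 1 one_pos).1

lemma KernelOK.integral_nonneg (hK : KernelOK R K) : 0 ≤ ∫ z, K z :=
  MeasureTheory.integral_nonneg hK.1

def upSign (U : Euc N → ℝ) (x z : Euc N) : ℝ := if U x ≤ U (x + z) then 1 else -1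

lemma abs_upSign_le (U : Euc N → ℝ) (x z : Euc N) : |upSign U x z| ≤ 1 := by
  unfold upSign; split_ifs <;> simp

lemma Continuous.measurable_upSign {U : Euc N → ℝ} (hU : Continuous U) (x : Euc N) :
    Measurable (upSign U x) :=
  Measurable.ite (isClosed_le continuous_const (hU.comp (continuous_const_add x))).measurableSet
    measurable_const measurable_const

lemma MeasureTheory.Integrable.mul_upSign (hK : Integrable K) {U : Euc N → ℝ} (hU : Continuous U)
    (x : Euc N) : Integrable (fun z => K z * upSign U x z) :=
  hK.mul_bdd (hU.measurable_upSign x).aestronglyMeasurable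
    (Eventually.of_forall fun z => (abs_upSign_le U x z :))

lemma kSt_eq_integral [Nontrivial (Euc N)] (hK : Integrable K) {U : Euc N → ℝ} (hU : Continuous U)
    (x : Euc N) : kSt K U x = ∫ z, K z * upSign U x z :=
  (tendsto_setIntegral_compl_ball (hK.mul_upSign hU x) 0).limUnder_eq

lemma kSt_le_integral [Nontrivial (Euc N)] (hK : KernelOK R K) {U : Euc N → ℝ}
    (hU : Continuous U) (x : Euc N) : kSt K U x ≤ ∫ z, K z := by
  rw [kSt_eq_integral hK.integrable hU]
  exact integral_mono (hK.integrable.mul_upSign hU x) hK.integrable fun z =>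
    mul_le_of_le_one_right (hK.1 z) (abs_le.1 (abs_upSign_le U x z)).2

def bandMass (K U : Euc N → ℝ) (x : Euc N) (δ : ℝ) : ℝ :=
  ∫ z in (fun z => U (x + z) - U x) ⁻¹' Ico (-δ) 0, K z

lemma tendsto_bandMass (hK : Integrable K) {U : Euc N → ℝ} (hU : Continuous U) (x : Euc N) :
    Tendsto (bandMass K U x) (𝓝[>] 0) (𝓝 0) :=
  tendsto_setIntegral_preimage_Ico_zero hK
    ((hU.comp (continuous_const_add x)).sub continuous_const).measurable

lemma kSt_le_kSt_add_bandMass [Nontrivial (Euc N)] (hK : KernelOK R K) {U V : Euc N → ℝ}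
    (hU : Continuous U) (hV : Continuous V) {x y : Euc N} {δ : ℝ}
    (h : ∀ z ∈ ball (0 : Euc N) R, U y ≤ U (y + z) → V x - δ ≤ V (x + z)) :
    kSt K U y ≤ kSt K V x + 2 * bandMass K V x δ := by
  set A := (fun z => V (x + z) - V x) ⁻¹' Ico (-δ) 0
  have hA : MeasurableSet A :=
    (hV.comp (continuous_const_add x)).sub continuous_const |>.measurable measurableSet_Ico
  have hKi := hK.integrable
  rw [kSt_eq_integral hKi hU, kSt_eq_integral hKi hV, bandMass, ← integral_indicator hA,
    ← integral_const_mul, ← integral_add (hKi.mul_upSign hV x) ((hKi.indicator hA).const_mul 2)]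
  refine integral_mono (hKi.mul_upSign hU y)
    ((hKi.mul_upSign hV x).add ((hKi.indicator hA).const_mul 2)) fun z => ?_
  have hKz := hK.1 z
  have hind : 0 ≤ A.indicator K z := indicator_nonneg (fun w _ => hK.1 w) z
  by_cases hz : K z = 0
  · simp [hz, hind]
  have hzR : z ∈ ball (0 : Euc N) R := hK.2.2.1 hz
  simp only [upSign]
  split_ifs with hUz hVz hVz
  · linarith
  · have hzA : z ∈ A := ⟨by linarith [h z hzR hUz], by simpa using not_le.1 hVz⟩
    rw [indicator_of_mem hzA]
    linarith
  · linarith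
  · linarith

end Curvature

section Game

variable {N : ℕ} {K : Euc N → ℝ} {R ε : ℝ} {φ : ℝ → Euc N → ℝ} {t : ℝ} {x y : Euc N}
  {ψ : Euc N → ℝ}

lemma TPg_nonneg (hε : 0 ≤ ε) (y : Euc N) (ψ : Euc N → ℝ) : 0 ≤ TPg K ε y ψ := by
  unfold TPg cutC
  split_ifs
  · exact le_min (le_max_of_le_right (by positivity)) (by positivity)
  · positivity

lemma TPg_le_rpow_of_active (h : gradient ψ y ≠ 0 ∧ 0 < kSt K ψ y) :
    TPg K ε y ψ ≤ ε ^ ((1:ℝ)/2) := by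
  rw [TPg, if_pos h]
  exact min_le_right _ _

lemma TPg_of_active (h : gradient ψ y ≠ 0 ∧ 0 < kSt K ψ y) (hε : 0 < ε)
    (hκ : kSt K ψ y * ε ^ ((1:ℝ)/2) ≤ 1) :
    TPg K ε y ψ = min (ε / kSt K ψ y) (ε ^ ((1:ℝ)/2)) := by
  rw [TPg, if_pos h, cutC, max_eq_left]
  rw [le_div_iff₀ h.2, show (3:ℝ)/2 = 1 + 1/2 by norm_num, Real.rpow_add hε, Real.rpow_one]
  nlinarith

lemma le_min_div_rpow_mul {κ : ℝ} (hκ : 0 < κ) (hε : 0 ≤ ε) :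
    ε ≤ min (ε / κ) (ε ^ ((1:ℝ)/2)) * (κ + ε ^ ((1:ℝ)/2)) := by
  have hs : ε ^ ((1:ℝ)/2) * ε ^ ((1:ℝ)/2) = ε := by
    rw [← Real.rpow_add' hε (by norm_num)]; norm_num
  have hs0 : 0 ≤ ε ^ ((1:ℝ)/2) := by positivity
  rcases min_cases (ε / κ) (ε ^ ((1:ℝ)/2)) with ⟨h, _⟩ | ⟨h, _⟩ <;> rw [h]
  · rw [div_mul_eq_mul_div, le_div_iff₀ hκ]; nlinarith
  · nlinarith

def RgPayoff (K : Euc N → ℝ) (R ε : ℝ) (φ : ℝ → Euc N → ℝ) (t : ℝ) (x : Euc N)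
    (p : Euc N × (Euc N → ℝ)) : ℝ :=
  sInf ((fun z => φ (t + TPg K ε p.1 p.2) z) '' Pplus K R x p.1 p.2)

lemma exists_Rg_lt_RgPayoff_add (hε : 0 < ε) {θ : ℝ} (hθ : 0 < θ) :
    ∃ p ∈ Cplus ε x, Rg K R ε φ t x < RgPayoff K R ε φ t x p + θ := by
  have hne : (RgPayoff K R ε φ t x '' Cplus ε x).Nonempty :=
    ⟨_, mem_image_of_mem _ (⟨mem_ball_self hε, contDiff_const, le_rfl⟩ :
      (x, fun _ => (0:ℝ)) ∈ Cplus ε x)⟩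
  obtain ⟨_, ⟨p, hp, rfl⟩, hlt⟩ := exists_lt_of_lt_csSup hne (sub_lt_self (Rg K R ε φ t x) hθ)
  exact ⟨p, hp, by linarith⟩

lemma RgPayoff_of_not_active (h : ¬(gradient ψ y ≠ 0 ∧ 0 < kSt K ψ y)) :
    RgPayoff K R ε φ t x (y, ψ) = φ (t + ε ^ 2) x := by
  simp only [RgPayoff, TPg, Pplus, if_neg h, image_singleton, csInf_singleton]

lemma RgPayoff_le_of_active (h : gradient ψ y ≠ 0 ∧ 0 < kSt K ψ y)
    (hb : BddBelow (range (φ (t + TPg K ε y ψ)))) {z : Euc N} (hz : z ∈ ball y R)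
    (hψz : ψ y ≤ ψ z) : RgPayoff K R ε φ t x (y, ψ) ≤ φ (t + TPg K ε y ψ) z :=
  csInf_le (hb.mono (image_subset_range _ _))
    (mem_image_of_mem _ (by rw [Pplus, if_pos h]; exact ⟨hz, hψz⟩))

end Game

section Estimate

variable {N : ℕ} {K : Euc N → ℝ} {R : ℝ} {φ : ℝ → Euc N → ℝ} {t₀ : ℝ} {x₀ : Euc N}

/-- Alternatives (i)–(iii) of the estimate, with the error `o(ε, r)` replaced by `η`. -/
def RgBound (K : Euc N → ℝ) (R : ℝ) (φ : ℝ → Euc N → ℝ) (t₀ : ℝ) (x₀ : Euc N)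
    (ε η t : ℝ) (x : Euc N) : Prop :=
  (Rg K R ε φ t x - φ t x ≤ ε ^ 2 * (deriv (fun s => φ s x₀) t₀ + η)) ∨
  (gradient (φ t₀) x₀ = 0 ∧ ∃ p ∈ Cplus ε x,
    Rg K R ε φ t x - φ t x ≤ TPg K ε p.1 p.2 * (deriv (fun s => φ s x₀) t₀ + η)) ∨
  (gradient (φ t₀) x₀ ≠ 0 ∧ 0 ≤ kSt K (φ t₀) x₀ ∧ ∃ p ∈ Cplus ε x,
    gradient p.2 p.1 ≠ 0 ∧ 0 < kSt K p.2 p.1 ∧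
    kSt K p.2 p.1 ≤ kSt K (φ t₀) x₀ + η ∧
    TPg K ε p.1 p.2 = min (ε / kSt K p.2 p.1) (ε ^ ((1:ℝ)/2)) ∧
    Rg K R ε φ t x - φ t x ≤ TPg K ε p.1 p.2 *
      (deriv (fun s => φ s x₀) t₀ + kSt K (φ t₀) x₀ * ‖gradient (φ t₀) x₀‖ + η))

lemma RgBound.mono {ε η η' t : ℝ} {x : Euc N} (hε : 0 < ε) (hη : η ≤ η')
    (h : RgBound K R φ t₀ x₀ ε η t x) : RgBound K R φ t₀ x₀ ε η' t x := by
  have hT : ∀ p : Euc N × (Euc N → ℝ), 0 ≤ TPg K ε p.1 p.2 := fun p => TPg_nonneg hε.le _ _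
  rcases h with h | ⟨hG, p, hp, h⟩ | ⟨hG, hκ, p, hp, h₁, h₂, h₃, h₄, h₅⟩
  · exact Or.inl (h.trans (by gcongr))
  · exact Or.inr (Or.inl ⟨hG, p, hp, h.trans (by gcongr; exact hT p)⟩)
  · exact Or.inr (Or.inr ⟨hG, hκ, p, hp, h₁, h₂, by linarith, h₄, h₅.trans (by gcongr; exact hT p)⟩)

structure LocalEstimates (R : ℝ) (φ : ℝ → Euc N → ℝ) (t₀ : ℝ) (x₀ : Euc N) (ε c δ t : ℝ)
    (x : Euc N) : Prop where
  bddBelow : ∀ τ ∈ Icc 0 (ε ^ ((1:ℝ)/2)), BddBelow (range (φ (t + τ)))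
  expansion : ∀ τ ∈ Icc 0 (ε ^ ((1:ℝ)/2)), ∀ y ∈ ball x ε,
    φ (t + τ) y - φ t x ≤
      τ * deriv (fun s => φ s x₀) t₀ + ⟪gradient (φ t₀) x₀, y - x⟫ + c * (τ + ‖y - x‖)
  level : ∀ τ ∈ Icc 0 (ε ^ ((1:ℝ)/2)), ∀ y ∈ ball x ε, ∀ z ∈ ball (0 : Euc N) R,
    φ t x + ε ^ 2 * deriv (fun s => φ s x₀) t₀ ≤ φ (t + τ) (y + z) →
      φ t₀ x₀ - δ ≤ φ t₀ (x₀ + z)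

lemma Rg_sub_lt_of_active (hR : 0 < R) (hK : KernelOK R K) {ε η c δ t : ℝ} {x y : Euc N}
    {ψ : Euc N → ℝ} (hε : 0 < ε) (hε1 : ε ≤ 1) (hsK : ε ^ ((1:ℝ)/2) * (∫ z, K z) ≤ 1)
    (hsL : ε ^ ((1:ℝ)/2) * ((∫ z, K z) + 1) ≤ η / 4) (hc0 : 0 ≤ c)
    (hc : c * ((∫ z, K z) + 2) ≤ η / 4) (hloc : LocalEstimates R φ t₀ x₀ ε c δ t x)
    (hp : (y, ψ) ∈ Cplus ε x) (hact : gradient ψ y ≠ 0 ∧ 0 < kSt K ψ y)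
    (hRg : Rg K R ε φ t x < RgPayoff K R ε φ t x (y, ψ) + ε ^ 3) :
    Rg K R ε φ t x - φ t x < TPg K ε y ψ * (deriv (fun s => φ s x₀) t₀ +
      ‖gradient (φ t₀) x₀‖ * (kSt K ψ y + ε ^ ((1:ℝ)/2)) + η / 2) := by
  have : Nontrivial (Euc N) := nontrivial_of_ne _ _ hact.1
  set s := ε ^ ((1:ℝ)/2)
  set T := TPg K ε y ψ
  have hεs : ε ≤ s := Real.self_le_rpow_of_le_one hε.le hε1 (by norm_num)
  have hs1 : s ≤ 1 := Real.rpow_le_one hε.le hε1 (by norm_num)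
  have hκK : kSt K ψ y ≤ ∫ z, K z := kSt_le_integral hK hp.2.1.continuous y
  have hT : T = min (ε / kSt K ψ y) s := TPg_of_active hact hε (by nlinarith)
  have hT0 : 0 ≤ T := TPg_nonneg hε.le y ψ
  have hTs : T ≤ s := TPg_le_rpow_of_active hact
  have hεT : ε ≤ T * (kSt K ψ y + s) := hT ▸ le_min_div_rpow_mul hact.2 hε.le
  have hεL : ε ≤ T * ((∫ z, K z) + 1) :=
    hεT.trans (mul_le_mul_of_nonneg_left (by linarith) hT0)
  have hyx : ‖y - x‖ ≤ ε := (mem_ball_iff_norm.1 hp.1).le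
  have hv : RgPayoff K R ε φ t x (y, ψ) ≤ φ (t + T) y :=
    RgPayoff_le_of_active hact (hloc.bddBelow T ⟨hT0, hTs⟩) (mem_ball_self hR) le_rfl
  have hexp := hloc.expansion T ⟨hT0, hTs⟩ y hp.1
  have hinner : ⟪gradient (φ t₀) x₀, y - x⟫ ≤ T * (‖gradient (φ t₀) x₀‖ * (kSt K ψ y + s)) :=
    calc _ ≤ ‖gradient (φ t₀) x₀‖ * ‖y - x‖ := real_inner_le_norm _ _
      _ ≤ ‖gradient (φ t₀) x₀‖ * (T * (kSt K ψ y + s)) := by gcongr; exact hyx.trans hεT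
      _ = _ := by ring
  have herr : c * (T + ‖y - x‖) + ε ^ 3 ≤ T * (η / 2) := by
    have h1 := mul_le_mul_of_nonneg_left (hyx.trans hεL) hc0
    have h2 := mul_le_mul_of_nonneg_left hεL (sq_nonneg ε)
    have h3 : c * (1 + ((∫ z, K z) + 1)) + ε * ((∫ z, K z) + 1) ≤ η / 2 := by
      nlinarith [mul_le_mul_of_nonneg_right hεs (by linarith [hK.integral_nonneg] :
        (0:ℝ) ≤ (∫ z, K z) + 1)]
    nlinarith [mul_le_mul_of_nonneg_left h3 hT0]
  linarith

theorem RgBound_of_localEstimates (hR : 0 < R) (hK : KernelOK R K) (hφ₀ : Continuous (φ t₀))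
    {ε η c δ t : ℝ} {x : Euc N} (hε : 0 < ε) (hε1 : ε ≤ 1)
    (hsK : ε ^ ((1:ℝ)/2) * (∫ z, K z) ≤ 1) (hsL : ε ^ ((1:ℝ)/2) * ((∫ z, K z) + 1) ≤ η / 4)
    (hsG : ε ^ ((1:ℝ)/2) * ‖gradient (φ t₀) x₀‖ ≤ η / 4)
    (hc0 : 0 ≤ c) (hc : c * ((∫ z, K z) + 2) ≤ η / 4)
    (hm : 2 * bandMass K (φ t₀) x₀ δ ≤ η)
    (hmG : ‖gradient (φ t₀) x₀‖ * (2 * bandMass K (φ t₀) x₀ δ) ≤ η / 4)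
    (hmκ : kSt K (φ t₀) x₀ < 0 → 2 * bandMass K (φ t₀) x₀ δ < -kSt K (φ t₀) x₀)
    (hloc : LocalEstimates R φ t₀ x₀ ε c δ t x) : RgBound K R φ t₀ x₀ ε η t x := by
  have hεs : ε ≤ ε ^ ((1:ℝ)/2) := Real.self_le_rpow_of_le_one hε.le hε1 (by norm_num)
  have hεη : ε ≤ η / 4 := by nlinarith [hK.integral_nonneg]
  have hcη : c ≤ η / 4 := by nlinarith [hK.integral_nonneg]
  obtain ⟨⟨y, ψ⟩, hp, hRg⟩ :=
    exists_Rg_lt_RgPayoff_add (K := K) (R := R) (φ := φ) (t := t) hε (pow_pos hε 3)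
  by_cases hact : gradient ψ y ≠ 0 ∧ 0 < kSt K ψ y
  swap
  · have h := hloc.expansion (ε ^ 2) ⟨by positivity, by nlinarith⟩ x (mem_ball_self hε)
    rw [RgPayoff_of_not_active hact] at hRg
    simp only [sub_self, inner_zero_right, norm_zero, add_zero] at h
    exact Or.inl (by nlinarith [mul_le_mul_of_nonneg_left (by linarith : c + ε ≤ η) (sq_nonneg ε)])
  have hbound := Rg_sub_lt_of_active hR hK hε hε1 hsK hsL hc0 hc hloc hp hact hRg
  have hT0 := TPg_nonneg (K := K) hε.le y ψ
  by_cases hG : gradient (φ t₀) x₀ = 0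
  · refine Or.inr (Or.inl ⟨hG, (y, ψ), hp, ?_⟩)
    rw [hG, norm_zero, zero_mul, add_zero] at hbound
    nlinarith
  by_cases hsmall : RgPayoff K R ε φ t x (y, ψ) < φ t x + ε ^ 2 * deriv (fun s => φ s x₀) t₀
  · exact Or.inl (by nlinarith [mul_le_mul_of_nonneg_left (by linarith : ε ≤ η) (sq_nonneg ε)])
  have : Nontrivial (Euc N) := nontrivial_of_ne _ _ hact.1
  have hbddT := hloc.bddBelow _ ⟨hT0, TPg_le_rpow_of_active hact⟩
  -- every point of the upper level set of `ψ` is an answer worth at least `φ t x + ε² ∂ₜφ`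
  have hcomp : kSt K ψ y ≤ kSt K (φ t₀) x₀ + 2 * bandMass K (φ t₀) x₀ δ :=
    kSt_le_kSt_add_bandMass hK hp.2.1.continuous hφ₀ fun z hz hψz =>
      hloc.level _ ⟨hT0, TPg_le_rpow_of_active hact⟩ y hp.1 z hz ((not_lt.1 hsmall).trans
        (RgPayoff_le_of_active hact hbddT (by simpa [dist_eq_norm] using hz) hψz))
  have hκ₀ : 0 ≤ kSt K (φ t₀) x₀ := by
    by_contra h
    linarith [hmκ (not_le.1 h), hact.2]
  refine Or.inr (Or.inr ⟨hG, hκ₀, (y, ψ), hp, hact.1, hact.2, by linarith,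
    TPg_of_active hact hε (by nlinarith [kSt_le_integral hK hp.2.1.continuous y]), ?_⟩)
  have hG0 := norm_nonneg (gradient (φ t₀) x₀)
  have herr : ‖gradient (φ t₀) x₀‖ * (kSt K ψ y + ε ^ ((1:ℝ)/2)) + η / 2 ≤
      kSt K (φ t₀) x₀ * ‖gradient (φ t₀) x₀‖ + η := by
    nlinarith [mul_le_mul_of_nonneg_left hcomp hG0]
  show _ ≤ TPg K ε y ψ * _
  nlinarith [mul_le_mul_of_nonneg_left herr hT0]

end Estimate

section Local

variable {N : ℕ} {K : Euc N → ℝ} {R : ℝ} {φ : ℝ → Euc N → ℝ} {t₀ : ℝ} {x₀ : Euc N}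

lemma exists_ball_first_order_bound {f' : ℝ × Euc N →L[ℝ] ℝ}
    (hφ : HasStrictFDerivAt (fun q : ℝ × Euc N => φ q.1 q.2) f' (t₀, x₀)) {c : ℝ} (hc : 0 < c) :
    ∃ ρ > 0, ∀ q ∈ ball (t₀, x₀) ρ, ∀ q' ∈ ball (t₀, x₀) ρ, φ q.1 q.2 - φ q'.1 q'.2 ≤
      (q.1 - q'.1) * deriv (fun s => φ s x₀) t₀ + ⟪gradient (φ t₀) x₀, q.2 - q'.2⟫ +
        c * ‖q - q'‖ := by
  obtain ⟨ρ, hρ, h⟩ := hφ.exists_ball_sub_le hc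
  refine ⟨ρ, hρ, fun q hq q' hq' => ?_⟩
  have hf' : f' (q - q') = (q.1 - q'.1) * deriv (fun s => φ s x₀) t₀ +
      ⟪gradient (φ t₀) x₀, q.2 - q'.2⟫ :=
    hφ.hasFDerivAt.apply_prod_eq (q - q').1 (q - q').2
  rw [← hf']
  exact h q hq q' hq'

lemma exists_ball_abs_sub_translate_lt
    (hφ : ∀ y, ContinuousAt (fun q : ℝ × Euc N => φ q.1 q.2) (t₀, y)) {ω : ℝ} (hω : 0 < ω) :
    ∃ ρ > 0, ∀ z ∈ ball (0 : Euc N) R, ∀ q ∈ ball (t₀, x₀) ρ,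
      |φ q.1 (q.2 + z) - φ t₀ (x₀ + z)| < ω := by
  have hS : IsCompact (({t₀} : Set ℝ) ×ˢ closedBall x₀ R) :=
    isCompact_singleton.prod (isCompact_closedBall x₀ R)
  obtain ⟨ρ, hρ, h⟩ := hS.exists_forall_dist_lt (f := fun q : ℝ × Euc N => φ q.1 q.2)
    (fun ⟨s, y⟩ ⟨(hs : s = t₀), _⟩ => hs ▸ hφ y) hω
  refine ⟨ρ, hρ, fun z hz q hq => ?_⟩
  have hmem : ((t₀, x₀ + z) : ℝ × Euc N) ∈ ({t₀} : Set ℝ) ×ˢ closedBall x₀ R :=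
    ⟨rfl, by simpa [dist_eq_norm] using (mem_ball_zero_iff.1 hz).le⟩
  have hdist : dist ((t₀, x₀ + z) : ℝ × Euc N) (q.1, q.2 + z) < ρ := by
    simpa [Prod.dist_eq, dist_add_right, dist_comm] using hq
  rw [abs_sub_comm, ← Real.dist_eq]
  exact h _ hmem _ hdist

lemma LocalEstimates.of_dist_lt {ρ c ω δ ε r t : ℝ} {x : Euc N} (hR : 0 < R) (hε : 0 < ε)
    (hbdd : ∀ s, |s - t₀| < ρ → BddBelow (range (φ s)))
    (hexp : ∀ q ∈ ball (t₀, x₀) ρ, ∀ q' ∈ ball (t₀, x₀) ρ, φ q.1 q.2 - φ q'.1 q'.2 ≤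
      (q.1 - q'.1) * deriv (fun s => φ s x₀) t₀ + ⟪gradient (φ t₀) x₀, q.2 - q'.2⟫ +
        c * ‖q - q'‖)
    (htrans : ∀ z ∈ ball (0 : Euc N) R, ∀ q ∈ ball (t₀, x₀) ρ,
      |φ q.1 (q.2 + z) - φ t₀ (x₀ + z)| < ω)
    (hc : 0 ≤ c) (hδ : 2 * ω + ε ^ 2 * |deriv (fun s => φ s x₀) t₀| ≤ δ)
    (hsρ : r + ε ^ ((1:ℝ)/2) < ρ) (hερ : r + ε < ρ) (hd : dist (t, x) (t₀, x₀) < r) :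
    LocalEstimates R φ t₀ x₀ ε c δ t x := by
  rw [Prod.dist_eq, max_lt_iff, Real.dist_eq] at hd
  obtain ⟨htd, hxd⟩ := hd
  have hq : ∀ τ ∈ Icc 0 (ε ^ ((1:ℝ)/2)), ∀ y ∈ ball x ε,
      ((t + τ, y) : ℝ × Euc N) ∈ ball (t₀, x₀) ρ := by
    intro τ hτ y hy
    rw [mem_ball, Prod.dist_eq, max_lt_iff, Real.dist_eq, abs_lt]
    refine ⟨⟨by linarith [abs_lt.1 htd, hτ.1], by linarith [abs_lt.1 htd, hτ.2]⟩, ?_⟩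
    linarith [dist_triangle y x x₀, mem_ball.1 hy]
  have hq₀ : ((t, x) : ℝ × Euc N) ∈ ball (t₀, x₀) ρ := by
    simpa using hq 0 ⟨le_rfl, by positivity⟩ x (mem_ball_self hε)
  refine ⟨fun τ hτ => hbdd _ ?_, fun τ hτ y hy => ?_, fun τ hτ y hy z hz hup => ?_⟩
  · have h := hq τ hτ x (mem_ball_self hε)
    rw [mem_ball, Prod.dist_eq, max_lt_iff, Real.dist_eq] at h
    exact h.1
  · have h := hexp _ (hq τ hτ y hy) _ hq₀
    have hnorm : ‖((τ, y - x) : ℝ × Euc N)‖ ≤ τ + ‖y - x‖ := by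
      simp only [Prod.norm_def, Real.norm_eq_abs, abs_of_nonneg hτ.1]
      exact max_le (by linarith [norm_nonneg (y - x)]) (by linarith [hτ.1])
    simp only [add_sub_cancel_left, Prod.mk_sub_mk] at h
    nlinarith [mul_le_mul_of_nonneg_left hnorm hc]
  · have h1 := htrans z hz _ (hq τ hτ y hy)
    have h2 := htrans 0 (mem_ball_self hR) _ hq₀
    simp only [add_zero] at h1 h2
    have ha := mul_le_mul_of_nonneg_left (neg_abs_le (deriv (fun s => φ s x₀) t₀)) (sq_nonneg ε)
    linarith [abs_lt.1 h1, abs_lt.1 h2]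

theorem eventually_RgBound_of_ball (hR : 0 < R) (hK : KernelOK R K) (hφ₀ : Continuous (φ t₀))
    {η c δ ρ : ℝ} (hη : 0 < η) (hδ : 0 < δ) (hρ : 0 < ρ) (hc0 : 0 ≤ c)
    (hc : c * ((∫ z, K z) + 2) ≤ η / 4) (hm : 2 * bandMass K (φ t₀) x₀ δ ≤ η)
    (hmG : ‖gradient (φ t₀) x₀‖ * (2 * bandMass K (φ t₀) x₀ δ) ≤ η / 4)
    (hmκ : kSt K (φ t₀) x₀ < 0 → 2 * bandMass K (φ t₀) x₀ δ < -kSt K (φ t₀) x₀)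
    (hbdd : ∀ s, |s - t₀| < ρ → BddBelow (range (φ s)))
    (hexp : ∀ q ∈ ball (t₀, x₀) ρ, ∀ q' ∈ ball (t₀, x₀) ρ, φ q.1 q.2 - φ q'.1 q'.2 ≤
      (q.1 - q'.1) * deriv (fun s => φ s x₀) t₀ + ⟪gradient (φ t₀) x₀, q.2 - q'.2⟫ +
        c * ‖q - q'‖)
    (htrans : ∀ z ∈ ball (0 : Euc N) R, ∀ q ∈ ball (t₀, x₀) ρ,
      |φ q.1 (q.2 + z) - φ t₀ (x₀ + z)| < δ / 3) :
    ∀ᶠ p : ℝ × ℝ in 𝓝[>] 0 ×ˢ 𝓝[>] 0,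
      ∀ t x, dist (t, x) (t₀, x₀) < p.2 → RgBound K R φ t₀ x₀ p.1 η t x := by
  have hs : Tendsto (fun ε : ℝ => ε ^ ((1:ℝ)/2)) (𝓝[>] 0) (𝓝 0) := by
    simpa using (Real.continuousAt_rpow_const 0 ((1:ℝ)/2) (Or.inr (by norm_num))).tendsto.mono_left
      nhdsWithin_le_nhds
  have hε : Tendsto (fun ε : ℝ => ε) (𝓝[>] 0) (𝓝 0) := nhdsWithin_le_nhds
  have hη4 : (0:ℝ) < η / 4 := by positivity
  have hsmall : ∀ᶠ ε in 𝓝[>] (0:ℝ), 0 < ε ∧ ε < 1 ∧ ε ^ ((1:ℝ)/2) * (∫ z, K z) < 1 ∧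
      ε ^ ((1:ℝ)/2) * ((∫ z, K z) + 1) < η / 4 ∧
      ε ^ ((1:ℝ)/2) * ‖gradient (φ t₀) x₀‖ < η / 4 ∧
      ε ^ 2 * |deriv (fun s => φ s x₀) t₀| < δ / 3 ∧ ε < ρ / 2 ∧ ε ^ ((1:ℝ)/2) < ρ / 2 :=
    eventually_mem_nhdsWithin.and <| (hε.eventually_lt_const one_pos).and <|
      ((hs.mul_const _).eventually_lt_const (by simp)).and <|
      ((hs.mul_const _).eventually_lt_const (by simpa using hη4)).and <|
      ((hs.mul_const _).eventually_lt_const (by simpa using hη4)).and <|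
      (((hε.pow 2).mul_const _).eventually_lt_const (by simpa using by positivity)).and <|
      (hε.eventually_lt_const (half_pos hρ)).and (hs.eventually_lt_const (half_pos hρ))
  filter_upwards [hsmall.prod_mk (hε.eventually_lt_const (half_pos hρ))]
    with ⟨ε, r⟩ ⟨⟨hε, hε1, hsK, hsL, hsG, hεa, hερ, hsρ⟩, hr⟩ t x hd
  exact RgBound_of_localEstimates hR hK hφ₀ hε hε1.le hsK.le hsL.le hsG.le hc0 hc hm hmG hmκ
    (LocalEstimates.of_dist_lt hR hε hbdd hexp htrans hc0 (by linarith) (by linarith)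
      (by linarith) hd)

theorem eventually_RgBound (hR : 0 < R) (hK : KernelOK R K)
    (hcont : ∀ y, ContinuousAt (fun q : ℝ × Euc N => φ q.1 q.2) (t₀, y))
    {f' : ℝ × Euc N →L[ℝ] ℝ}
    (hdiff : HasStrictFDerivAt (fun q : ℝ × Euc N => φ q.1 q.2) f' (t₀, x₀))
    (hbdd : ∃ ρ > 0, ∀ s, |s - t₀| < ρ → BddBelow (range (φ s))) {η : ℝ} (hη : 0 < η) :
    ∀ᶠ p : ℝ × ℝ in 𝓝[>] 0 ×ˢ 𝓝[>] 0,
      ∀ t x, dist (t, x) (t₀, x₀) < p.2 → RgBound K R φ t₀ x₀ p.1 η t x := by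
  have hφ₀ : Continuous (φ t₀) :=
    continuous_iff_continuousAt.2 fun y => (hcont y).comp (Continuous.prodMk_right t₀).continuousAt
  have hband : Tendsto (fun δ => 2 * bandMass K (φ t₀) x₀ δ) (𝓝[>] 0) (𝓝 0) := by
    simpa using (tendsto_bandMass hK.integrable hφ₀ x₀).const_mul 2
  have hκ : ∀ᶠ δ in 𝓝[>] 0,
      kSt K (φ t₀) x₀ < 0 → 2 * bandMass K (φ t₀) x₀ δ < -kSt K (φ t₀) x₀ := by
    by_cases h : kSt K (φ t₀) x₀ < 0
    · filter_upwards [hband.eventually_lt_const (neg_pos.2 h)] with δ hδ _ using hδ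
    · exact Eventually.of_forall fun δ h' => absurd h' h
  have hbandG : Tendsto (fun δ => ‖gradient (φ t₀) x₀‖ * (2 * bandMass K (φ t₀) x₀ δ))
      (𝓝[>] 0) (𝓝 0) := by simpa using hband.const_mul ‖gradient (φ t₀) x₀‖
  obtain ⟨δ, (hδ : 0 < δ), hm, hmG, hmκ⟩ := (eventually_mem_nhdsWithin.and
    ((hband.eventually_lt_const hη).and
      ((hbandG.eventually_lt_const (by positivity : (0:ℝ) < η / 4)).and hκ))).exists
  have hc : 0 < η / 4 / ((∫ z, K z) + 2) :=
    div_pos (by positivity) (by linarith [hK.integral_nonneg])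
  obtain ⟨ρ₁, hρ₁, hexp⟩ := exists_ball_first_order_bound hdiff hc
  obtain ⟨ρ₂, hρ₂, htrans⟩ :=
    exists_ball_abs_sub_translate_lt (R := R) (x₀ := x₀) hcont (by positivity : 0 < δ / 3)
  obtain ⟨ρ₃, hρ₃, hbdd⟩ := hbdd
  have hρ₁₂ := min_le_left ρ₁ (min ρ₂ ρ₃)
  have hρ₂₃ := min_le_right ρ₁ (min ρ₂ ρ₃)
  exact eventually_RgBound_of_ball hR hK hφ₀ hη hδ (lt_min hρ₁ (lt_min hρ₂ hρ₃)) hc.le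
    (div_mul_cancel₀ _ (by linarith [hK.integral_nonneg])).le hm.le hmG.le hmκ
    (fun s hs => hbdd s (hs.trans_le (hρ₂₃.trans (min_le_right _ _))))
    (fun q hq q' hq' => hexp q (ball_subset_ball hρ₁₂ hq) q' (ball_subset_ball hρ₁₂ hq'))
    (fun z hz q hq => htrans z hz q (ball_subset_ball (hρ₂₃.trans (min_le_left _ _)) hq))

end Local

theorem estimate_above_Rup_curvature_general
    {N : ℕ} (R : ℝ) (hR : 0 < R) (T : ℝ)
    (K : Euc N → ℝ) (hK : KernelOK R K)
    (φ : ℝ → Euc N → ℝ)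
    (hφ : ContDiffOn ℝ 2 (fun p : ℝ × Euc N => φ p.1 p.2) (Ioc (0:ℝ) T ×ˢ univ))
    (hφb : ∃ M, ∀ t ∈ Ioc (0:ℝ) T, ∀ x, |φ t x| ≤ M)
    (t₀ : ℝ) (x₀ : Euc N) (ht₀ : t₀ ∈ Ioo (0:ℝ) T) :
    ∃ o : ℝ → ℝ → ℝ, (∀ ε r, 0 ≤ o ε r) ∧
      Tendsto (fun p : ℝ × ℝ => o p.1 p.2) (𝓝[Ioi 0 ×ˢ Ioi 0] ((0:ℝ), (0:ℝ))) (𝓝 0) ∧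
      ∃ ε₀ > (0:ℝ), ∃ r₀ > (0:ℝ), ∀ ε ∈ Ioo (0:ℝ) ε₀, ∀ r ∈ Ioo (0:ℝ) r₀,
        ∀ (t : ℝ) (x : Euc N), dist (t, x) (t₀, x₀) < r →
          -- (i)
          (Rg K R ε φ t x - φ t x ≤ ε ^ 2 * (deriv (fun s => φ s x₀) t₀ + o ε r)) ∨
          -- (ii)
          (gradient (φ t₀) x₀ = 0 ∧ ∃ p ∈ Cplus ε x,
            Rg K R ε φ t x - φ t x ≤ TPg K ε p.1 p.2 *
              (deriv (fun s => φ s x₀) t₀ + o ε r)) ∨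
          -- (iii)
          (gradient (φ t₀) x₀ ≠ 0 ∧ 0 ≤ kSt K (φ t₀) x₀ ∧ ∃ p ∈ Cplus ε x,
            gradient p.2 p.1 ≠ 0 ∧ 0 < kSt K p.2 p.1 ∧
            kSt K p.2 p.1 ≤ kSt K (φ t₀) x₀ + o ε r ∧
            TPg K ε p.1 p.2 = min (ε / kSt K p.2 p.1) (ε ^ ((1:ℝ)/2)) ∧
            Rg K R ε φ t x - φ t x ≤ TPg K ε p.1 p.2 *
              (deriv (fun s => φ s x₀) t₀ +
                kSt K (φ t₀) x₀ * ‖gradient (φ t₀) x₀‖ + o ε r)) := by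
  have hnhds : ∀ y : Euc N, Ioc (0:ℝ) T ×ˢ univ ∈ 𝓝 ((t₀, y) : ℝ × Euc N) := fun y =>
    prod_mem_nhds (Ioc_mem_nhds ht₀.1 ht₀.2) univ_mem
  have hbdd : ∃ ρ > 0, ∀ s, |s - t₀| < ρ → BddBelow (range (φ s)) := by
    obtain ⟨M, hM⟩ := hφb
    refine ⟨min t₀ (T - t₀), lt_min ht₀.1 (sub_pos.2 ht₀.2), fun s hs => ⟨-M, ?_⟩⟩
    rintro _ ⟨y, rfl⟩
    have hs₀ := abs_lt.1 (hs.trans_le (min_le_left _ _))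
    have hsT := abs_lt.1 (hs.trans_le (min_le_right _ _))
    exact neg_le_of_abs_le (hM s ⟨by linarith, by linarith⟩ y)
  exact exists_modulus_of_forall_pos
    (P := fun ε r η => ∀ t x, dist (t, x) (t₀, x₀) < r → RgBound K R φ t₀ x₀ ε η t x)
    (fun ε r η η' hε hη h t x hd => (h t x hd).mono hε hη)
    fun η hη => eventually_RgBound hR hK (fun y => hφ.continuousOn.continuousAt (hnhds y))
      ((hφ.contDiffAt (hnhds x₀)).hasStrictFDerivAt (by norm_num)) hbdd hη

/-- Lemma 3.8: estimate from above for `R^ε` (integral curvature game). -/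
theorem estimate_above_Rup_curvature
    {N : ℕ} (hN : 1 ≤ N) (R : ℝ) (hR : 0 < R) (T : ℝ) (hT : 0 < T)
    (K : Euc N → ℝ) (hK : KernelOK R K)
    (φ : ℝ → Euc N → ℝ)
    (hφ : ContDiffOn ℝ 2 (fun p : ℝ × Euc N => φ p.1 p.2) (Ioc (0:ℝ) T ×ˢ univ))
    (hφb : ∃ M, ∀ t ∈ Ioc (0:ℝ) T, ∀ x, |φ t x| ≤ M)
    (t₀ : ℝ) (x₀ : Euc N) (ht₀ : t₀ ∈ Ioo (0:ℝ) T) :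
    ∃ o : ℝ → ℝ → ℝ, (∀ ε r, 0 ≤ o ε r) ∧
      Tendsto (fun p : ℝ × ℝ => o p.1 p.2) (𝓝[Ioi 0 ×ˢ Ioi 0] ((0:ℝ), (0:ℝ))) (𝓝 0) ∧
      ∃ ε₀ > (0:ℝ), ∃ r₀ > (0:ℝ), ∀ ε ∈ Ioo (0:ℝ) ε₀, ∀ r ∈ Ioo (0:ℝ) r₀,
        ∀ (t : ℝ) (x : Euc N), dist (t, x) (t₀, x₀) < r →
          -- (i)
          (Rg K R ε φ t x - φ t x ≤ ε ^ 2 * (deriv (fun s => φ s x₀) t₀ + o ε r)) ∨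
          -- (ii)
          (gradient (φ t₀) x₀ = 0 ∧ ∃ p ∈ Cplus ε x,
            Rg K R ε φ t x - φ t x ≤ TPg K ε p.1 p.2 *
              (deriv (fun s => φ s x₀) t₀ + o ε r)) ∨
          -- (iii)
          (gradient (φ t₀) x₀ ≠ 0 ∧ 0 ≤ kSt K (φ t₀) x₀ ∧ ∃ p ∈ Cplus ε x,
            gradient p.2 p.1 ≠ 0 ∧ 0 < kSt K p.2 p.1 ∧
            kSt K p.2 p.1 ≤ kSt K (φ t₀) x₀ + o ε r ∧
            TPg K ε p.1 p.2 = min (ε / kSt K p.2 p.1) (ε ^ ((1:ℝ)/2)) ∧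
            Rg K R ε φ t x - φ t x ≤ TPg K ε p.1 p.2 *
              (deriv (fun s => φ s x₀) t₀ +
                kSt K (φ t₀) x₀ * ‖gradient (φ t₀) x₀‖ + o ε r)) :=
  estimate_above_Rup_curvature_general R hR T K hK φ hφ hφb t₀ x₀ ht₀
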